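/- Let B = (b_{i1...im}) be a real tensor of order m ≥ 2 and dimension n ≥ 2. If B is a B-tensor, then B is a double B-tensor. -/

import Mathlib

open Finset

/-- The set of index tuples `(i, i₂, …, i_m)` in row `i` of an order-`m`, dimension-`n`
tensor, i.e. all tuples whose first index is `i`. -/
def rowSet (m n : ℕ) (i : Fin n) : Finset (Fin m → Fin n) :=
  Finset.univ.filter fun α => ∀ t : Fin m, (t : ℕ) = 0 → α t = i

/-- The set of off-diagonal index tuples in row `i`: tuples whose first index is `i`
and whose indices are not all equal to `i` (i.e. `δ_{i i₂ … i_m} = 0`). -/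
def offRowSet (m n : ℕ) (i : Fin n) : Finset (Fin m → Fin n) :=
  Finset.univ.filter fun α => (∀ t : Fin m, (t : ℕ) = 0 → α t = i) ∧ α ≠ fun _ => i

/-- The diagonal entry `b_{i…i}`. -/
def diagEntry {m n : ℕ} (B : (Fin m → Fin n) → ℝ) (i : Fin n) : ℝ :=
  B fun _ => i

/-- `β_i(B) = max {0, b_{i j₂ ⋯ j_m} : δ_{i j₂ … j_m} = 0}`. -/
def betaMax {m n : ℕ} (B : (Fin m → Fin n) → ℝ) (i : Fin n) : ℝ :=
  (offRowSet m n i).fold max 0 B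

/-- `Δ_i(B) = Σ_{δ_{i i₂…i_m} = 0} (β_i(B) - b_{i i₂ ⋯ i_m})`. -/
def DeltaSum {m n : ℕ} (B : (Fin m → Fin n) → ℝ) (i : Fin n) : ℝ :=
  ∑ α ∈ offRowSet m n i, (betaMax B i - B α)

/-- `r_i(B) = Σ_{δ_{i i₂…i_m} = 0} |b_{i i₂ ⋯ i_m}|`. -/
def rowAbsSum {m n : ℕ} (B : (Fin m → Fin n) → ℝ) (i : Fin n) : ℝ :=
  ∑ α ∈ offRowSet m n i, |B α|

/-- The index tuple `(j, i, i, …, i)`. -/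
def spike (m n : ℕ) (j i : Fin n) : Fin m → Fin n :=
  fun t => if (t : ℕ) = 0 then j else i

/-- `Δ_j^i(B) = Δ_j(B) - (β_j(B) - b_{j i⋯i})`. -/
def DeltaSubSum {m n : ℕ} (B : (Fin m → Fin n) → ℝ) (j i : Fin n) : ℝ :=
  DeltaSum B j - (betaMax B j - B (spike m n j i))

/-- `r_j^i(B) = r_j(B) - |b_{j i⋯i}|`. -/
def rowAbsSubSum {m n : ℕ} (B : (Fin m → Fin n) → ℝ) (j i : Fin n) : ℝ :=
  rowAbsSum B j - |B (spike m n j i)|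

/-- `B` is a B-tensor: each row sum is positive and `(1/n^{m-1})` times the row sum
strictly dominates every off-diagonal entry of that row. -/
def IsBTensor {m n : ℕ} (B : (Fin m → Fin n) → ℝ) : Prop :=
  ∀ i : Fin n,
    0 < ∑ α ∈ rowSet m n i, B α ∧
    ∀ α ∈ offRowSet m n i,
      B α < (1 / (n : ℝ) ^ (m - 1)) * ∑ α' ∈ rowSet m n i, B α'

/-- `B` is a double B-tensor. -/
def IsDoubleBTensor {m n : ℕ} (B : (Fin m → Fin n) → ℝ) : Prop :=
  (∀ i, betaMax B i < diagEntry B i) ∧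
  (∀ i, DeltaSum B i ≤ diagEntry B i - betaMax B i) ∧
  (∀ i j, i ≠ j →
    DeltaSum B i * DeltaSum B j <
      (diagEntry B i - betaMax B i) * (diagEntry B j - betaMax B j))

/-- `B` is a quasi-double B-tensor. -/
def IsQuasiDoubleBTensor {m n : ℕ} (B : (Fin m → Fin n) → ℝ) : Prop :=
  (∀ i, betaMax B i < diagEntry B i) ∧
  ∀ i j, i ≠ j →
    (betaMax B j - B (spike m n j i)) * DeltaSum B i <
      (diagEntry B i - betaMax B i) *
        (diagEntry B j - betaMax B j - DeltaSubSum B j i)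

/-- `B` is a Z-tensor: all off-diagonal entries are non-positive. -/
def IsZTensor {m n : ℕ} (B : (Fin m → Fin n) → ℝ) : Prop :=
  ∀ α : Fin m → Fin n, (∃ s t, α s ≠ α t) → B α ≤ 0

/-- `B` is a symmetric tensor: invariant under permutations of the indices. -/
def IsSymmetricTensor {m n : ℕ} (B : (Fin m → Fin n) → ℝ) : Prop :=
  ∀ (σ : Equiv.Perm (Fin m)) (α : Fin m → Fin n), B (α ∘ σ) = B α

/-- `B` is doubly strictly diagonally dominant (for order `m > 2`). -/
def IsDSDD {m n : ℕ} (B : (Fin m → Fin n) → ℝ) : Prop :=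
  (∀ i, rowAbsSum B i ≤ |diagEntry B i|) ∧
  (∀ i j, i ≠ j → rowAbsSum B i * rowAbsSum B j < |diagEntry B i| * |diagEntry B j|)

/-- `B` is quasi-doubly strictly diagonally dominant. -/
def IsQDSDD {m n : ℕ} (B : (Fin m → Fin n) → ℝ) : Prop :=
  ∀ i j, i ≠ j →
    rowAbsSum B i * |B (spike m n j i)| <
      |diagEntry B i| * (|diagEntry B j| - rowAbsSubSum B j i)

/-- `B x^m = Σ b_{i₁⋯i_m} x_{i₁} ⋯ x_{i_m}`. -/
def tensorApply {m n : ℕ} (B : (Fin m → Fin n) → ℝ) (x : Fin n → ℝ) : ℝ :=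
  ∑ α : Fin m → Fin n, B α * ∏ t, x (α t)

/-- `B` is positive definite: `B x^m > 0` for every nonzero `x ∈ ℝ^n`. -/
def IsPosDefTensor {m n : ℕ} (B : (Fin m → Fin n) → ℝ) : Prop :=
  ∀ x : Fin n → ℝ, x ≠ 0 → 0 < tensorApply B x

/-- `(B x^{m-1})_i = Σ_{i₂,…,i_m} b_{i i₂ ⋯ i_m} x_{i₂} ⋯ x_{i_m}`. -/
def rowApply {m n : ℕ} (B : (Fin m → Fin n) → ℝ) (x : Fin n → ℝ) (i : Fin n) : ℝ :=
  ∑ α ∈ rowSet m n i, B α * ∏ t ∈ Finset.univ.filter (fun t : Fin m => (t : ℕ) ≠ 0), x (α t)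

/-- `B` is a P-tensor: for every nonzero `x`, `max_i x_i (B x^{m-1})_i > 0`. -/
def IsPTensor {m n : ℕ} (B : (Fin m → Fin n) → ℝ) : Prop :=
  ∀ x : Fin n → ℝ, x ≠ 0 → ∃ i, 0 < x i * rowApply B x i

/-- `lam` is an H-eigenvalue of `B`. -/
def IsHEigenvalue {m n : ℕ} (B : (Fin m → Fin n) → ℝ) (lam : ℝ) : Prop :=
  ∃ x : Fin n → ℝ, x ≠ 0 ∧ ∀ i, rowApply B x i = lam * x i ^ (m - 1)

/-- The partially all one tensor `ε^J`: entry `1` if all indices lie in `J`, else `0`. -/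
def epsTensor (m n : ℕ) (J : Finset (Fin n)) : (Fin m → Fin n) → ℝ :=
  fun α => if ∀ t, α t ∈ J then 1 else 0

section Aux
variable {m n : ℕ}

lemma mem_rowSet_iff (hm : 2 ≤ m) (i : Fin n) (α : Fin m → Fin n) :
    α ∈ rowSet m n i ↔ α ⟨0, by omega⟩ = i := by
  simp only [rowSet, Finset.mem_filter, Finset.mem_univ, true_and]
  constructor
  · intro h; exact h ⟨0, by omega⟩ rfl
  · intro h t ht
    have : t = ⟨0, by omega⟩ := Fin.ext ht
    rw [this]; exact h

lemma rowSet_card (hm : 2 ≤ m) (i : Fin n) : (rowSet m n i).card = n ^ (m - 1) := by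
  haveI : NeZero m := ⟨by omega⟩
  have h0 : rowSet m n i =
      Fintype.piFinset (fun t : Fin m => if t = ⟨0, by omega⟩ then {i} else Finset.univ) := by
    ext α
    rw [mem_rowSet_iff hm, Fintype.mem_piFinset]
    constructor
    · intro h t
      by_cases ht : t = ⟨0, by omega⟩ <;>
        simp only [ht, h, eq_self_iff_true, if_true, if_false, ↓reduceIte, Finset.mem_singleton,
          Finset.mem_univ]
    · intro h
      have := h ⟨0, by omega⟩
      simpa using this
  rw [h0, Fintype.card_piFinset]
  have h1 : ∀ t : Fin m,
      (if t = ⟨0, by omega⟩ then ({i} : Finset (Fin n)) else Finset.univ).card =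
      if t = ⟨0, by omega⟩ then 1 else n := by
    intro t; by_cases ht : t = ⟨0, by omega⟩ <;>
      simp only [ht, eq_self_iff_true, if_true, if_false, ↓reduceIte, Finset.card_singleton,
        Finset.card_univ, Fintype.card_fin]
  rw [Finset.prod_congr rfl (fun t _ => h1 t)]
  rw [← Finset.mul_prod_erase Finset.univ _ (Finset.mem_univ (⟨0, by omega⟩ : Fin m))]
  rw [if_pos rfl, one_mul]
  rw [Finset.prod_congr rfl (fun t ht => if_neg (Finset.ne_of_mem_erase ht))]
  rw [Finset.prod_const, Finset.card_erase_of_mem (Finset.mem_univ _), Finset.card_univ,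
    Fintype.card_fin]

lemma offRowSet_eq (i : Fin n) :
    offRowSet m n i = (rowSet m n i).erase (fun _ => i) := by
  ext α
  simp only [offRowSet, rowSet, Finset.mem_filter, Finset.mem_univ, true_and,
    Finset.mem_erase]
  tauto

lemma const_mem_rowSet (hm : 2 ≤ m) (i : Fin n) : (fun _ => i) ∈ rowSet m n i := by
  rw [mem_rowSet_iff hm]

lemma offRowSet_card (hm : 2 ≤ m) (i : Fin n) :
    (offRowSet m n i).card = n ^ (m - 1) - 1 := by
  rw [offRowSet_eq, Finset.card_erase_of_mem (const_mem_rowSet hm i), rowSet_card hm]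

lemma betaMax_nonneg (B : (Fin m → Fin n) → ℝ) (i : Fin n) : 0 ≤ betaMax B i :=
  (Finset.le_fold_max _).2 (Or.inl le_rfl)

lemma le_betaMax (B : (Fin m → Fin n) → ℝ) {i : Fin n} {α : Fin m → Fin n}
    (h : α ∈ offRowSet m n i) : B α ≤ betaMax B i :=
  (Finset.le_fold_max _).2 (Or.inr ⟨α, h, le_rfl⟩)

lemma key (hm : 2 ≤ m) (hn : 2 ≤ n) (B : (Fin m → Fin n) → ℝ)
    (hB : IsBTensor B) (i : Fin n) :
    0 ≤ DeltaSum B i ∧ DeltaSum B i < diagEntry B i - betaMax B i ∧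
      betaMax B i < diagEntry B i := by
  obtain ⟨hpos, hlt⟩ := hB i
  set S := ∑ α ∈ rowSet m n i, B α with hS
  set N : ℝ := (n : ℝ) ^ (m - 1) with hN
  have hN0 : (0 : ℝ) < N := by positivity
  have hbeta : betaMax B i < S / N := by
    have : (offRowSet m n i).fold max 0 B < S / N := by
      rw [Finset.fold_max_lt]
      refine ⟨by positivity, fun α ha => ?_⟩
      have := hlt α ha
      rw [div_eq_inv_mul, ← one_div]
      exact this
    exact this
  have hNb : N * betaMax B i < S := by
    rwa [lt_div_iff₀ hN0, mul_comm] at hbeta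
  -- split the sum
  have hsplit : B (fun _ => i) + ∑ α ∈ offRowSet m n i, B α = S := by
    rw [offRowSet_eq, hS]
    exact Finset.add_sum_erase _ _ (const_mem_rowSet hm i)
  have hcard : ((offRowSet m n i).card : ℝ) = N - 1 := by
    rw [offRowSet_card hm, hN]
    have h1 : 1 ≤ n ^ (m - 1) := Nat.one_le_pow _ _ (by omega)
    push_cast [h1]
    ring
  have hsumle : ∑ α ∈ offRowSet m n i, B α ≤ (N - 1) * betaMax B i := by
    calc ∑ α ∈ offRowSet m n i, B α ≤ ∑ _α ∈ offRowSet m n i, betaMax B i :=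
          Finset.sum_le_sum fun α ha => le_betaMax B ha
      _ = (N - 1) * betaMax B i := by rw [Finset.sum_const, nsmul_eq_mul, hcard]
  have hDelta : DeltaSum B i = (N - 1) * betaMax B i - (S - diagEntry B i) := by
    unfold DeltaSum
    rw [Finset.sum_sub_distrib, Finset.sum_const, nsmul_eq_mul, hcard]
    have : ∑ α ∈ offRowSet m n i, B α = S - diagEntry B i := by
      rw [← hsplit]; unfold diagEntry; ring
    rw [this]
  refine ⟨?_, ?_, ?_⟩
  · unfold DeltaSum
    exact Finset.sum_nonneg fun α ha => sub_nonneg.2 (le_betaMax B ha)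
  · rw [hDelta]
    have : diagEntry B i = S - ∑ α ∈ offRowSet m n i, B α := by
      rw [← hsplit]; unfold diagEntry; ring
    nlinarith [hNb]
  · have hdiag : betaMax B i < diagEntry B i := by
      have h1 : diagEntry B i = S - ∑ α ∈ offRowSet m n i, B α := by
        rw [← hsplit]; unfold diagEntry; ring
      nlinarith [hsumle, hNb]
    exact hdiag

end Aux

/-- every B-tensor is a double B-tensor. -/
theorem stmt3 (m n : ℕ) (hm : 2 ≤ m) (hn : 2 ≤ n) (B : (Fin m → Fin n) → ℝ)
    (hB : IsBTensor B) : IsDoubleBTensor B := by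

  have h := key hm hn B hB
  refine ⟨fun i => (h i).2.2, fun i => le_of_lt (h i).2.1, fun i j _ => ?_⟩
  obtain ⟨h1i, h2i, _⟩ := h i
  obtain ⟨h1j, h2j, _⟩ := h j
  exact mul_lt_mul'' h2i h2j h1i h1j
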